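/- arXiv:2212.01826 — 4 statements merged into one kernel-verified Lean document; each statement's English description precedes it below -/
import Mathlib

section
/- Let A be an associative unital algebra over a commutative ring R, and let J be a left ideal of A generated by finitely many pairwise commuting idempotents. Then J is a projective left A-module. -/
/-!
For commuting idempotents `a` and `b`, the element `1 - (1 - a) * (1 - b)` is again idempotent and
generates the left ideal `A a + A b`. By induction on the generators, `J = A f` for a single
idempotent `f`; then `a ↦ a * f` is a retraction of `A` onto `A f`, so `A f` is a direct summand
of the free module `A`, hence projective.
-/

section

variable {A : Type*} [Ring A]

namespace IsIdempotentElem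

theorem span_singleton_sup_span_singleton {a b : A} (ha : IsIdempotentElem a)
    (hb : IsIdempotentElem b) (hab : Commute a b) :
    Ideal.span {a} ⊔ Ideal.span {b} = Ideal.span {1 - (1 - a) * (1 - b)} := by
  apply le_antisymm
  · refine sup_le ?_ ?_ <;> rw [Ideal.span_singleton_le_iff_mem, Ideal.mem_span_singleton']
    · refine ⟨a, ?_⟩
      rw [mul_sub, mul_one, ← mul_assoc, ha.mul_one_sub_self, zero_mul, sub_zero]
    · refine ⟨b, ?_⟩
      rw [mul_sub, mul_one, ← mul_assoc, ((Commute.one_right b).sub_right hab.symm).eq, mul_assoc,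
        hb.mul_one_sub_self, mul_zero, sub_zero]
  · have hform : 1 - (1 - a) * (1 - b) = a + (1 - a) * b := by noncomm_ring
    rw [Ideal.span_singleton_le_iff_mem, hform]
    exact Submodule.add_mem_sup (Ideal.mem_span_singleton_self a)
      (Ideal.mul_mem_left _ _ (Ideal.mem_span_singleton_self b))

theorem projective_span_singleton {f : A} (hf : IsIdempotentElem f) :
    Module.Projective A (Ideal.span {f}) := by
  refine .of_split (Ideal.span {f}).subtype ((LinearMap.mulRight A f).codRestrict _
    fun a => Ideal.mem_span_singleton'.2 ⟨a, rfl⟩) ?_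
  ext ⟨x, hx⟩
  obtain ⟨c, rfl⟩ := Ideal.mem_span_singleton'.1 hx
  simp [mul_assoc, hf.eq]

end IsIdempotentElem

/-- Keeping `f` in the double centralizer of `s` is what makes it commute with every further
generator that commutes with `s`, so that the induction goes through. -/
theorem Ideal.exists_isIdempotentElem_span_eq {s : Set A} (hs : s.Finite)
    (hid : ∀ a ∈ s, IsIdempotentElem a) (hcomm : s.Pairwise Commute) :
    ∃ f ∈ s.centralizer.centralizer, IsIdempotentElem f ∧ Ideal.span s = Ideal.span {f} := by
  induction s, hs using Set.Finite.induction_on with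
  | empty => exact ⟨0, zero_mem (Subring.centralizer _), .zero, by simp⟩
  | @insert a s has _ ih =>
    have ha := hid a (Set.mem_insert a s)
    obtain ⟨f, hfc, hf, hspan⟩ := ih (fun x hx => hid x (Set.mem_insert_of_mem a hx))
      (hcomm.mono (Set.subset_insert a s))
    have ha_cent : a ∈ s.centralizer := fun m hm =>
      (hcomm (Set.mem_insert_of_mem a hm) (Set.mem_insert a s) (ne_of_mem_of_not_mem hm has)).eq
    have hmono : s.centralizer.centralizer ⊆ (insert a s).centralizer.centralizer :=
      Set.centralizer_subset (Set.centralizer_subset (Set.subset_insert a s))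
    have haf : Commute a f := hfc a ha_cent
    refine ⟨1 - (1 - a) * (1 - f), ?_, ?_, ?_⟩
    · show _ ∈ Subring.centralizer _
      exact sub_mem (one_mem _) (mul_mem (sub_mem (one_mem _)
        (Set.subset_centralizer_centralizer (Set.mem_insert a s)))
        (sub_mem (one_mem _) (hmono hfc)))
    · have hcompl : Commute (1 - a) (1 - f) :=
        (Commute.one_left _).sub_left ((Commute.one_right a).sub_right haf)
      exact (ha.one_sub.mul_of_commute hcompl hf.one_sub).one_sub
    · rw [Ideal.span_insert, hspan, ha.span_singleton_sup_span_singleton hf haf]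

end

theorem span_commuting_idempotents_projective_general (A : Type*) [Ring A] (k : ℕ) (e : Fin k → A)
    (hid : ∀ i, e i * e i = e i)
    (hcomm : ∀ i j, e i * e j = e j * e i) :
    Module.Projective A (Ideal.span (Set.range e) : Ideal A) := by
  obtain ⟨f, -, hf, hspan⟩ := Ideal.exists_isIdempotentElem_span_eq (Set.finite_range e)
    (by rintro _ ⟨i, rfl⟩; exact hid i) (by rintro _ ⟨i, rfl⟩ _ ⟨j, rfl⟩ -; exact hcomm i j)
  rw [hspan]
  exact hf.projective_span_singleton

/-- Let `A` be an associative unital algebra over a commutative ring `R`, and let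
`J` be a left ideal of `A` generated by finitely many pairwise commuting
idempotents. Then `J` is a projective left `A`-module. -/
theorem span_commuting_idempotents_projective (R A : Type*) [CommRing R] [Ring A]
    [Algebra R A] (k : ℕ) (e : Fin k → A)
    (hid : ∀ i, e i * e i = e i)
    (hcomm : ∀ i j, e i * e j = e j * e i) :
    Module.Projective A (Ideal.span (Set.range e) : Ideal A) :=
  span_commuting_idempotents_projective_general A k e hid hcomm
end

section
/- Let A be a subalgebra of the rook-Brauer algebra RBr_n(δ, ε) that is free as an R-module on a subset of the rook-Brauer diagrams and contains at least one diagram with the maximum number n of left-to-right connections. Let A_max be the R-span of the diagrams in A with exactly n left-to-right connections, and let I_{n−1} be the two-sided ideal of RBr_n spanned by diagrams with fewer than n left-to-right connections. Then A_max is a subalgebra of A isomorphic to the group ring RG for some subgroup G ≤ Σ_n, and the composite A_max → A → A/(A ∩ I_{n−1}) is an algebra isomorphism, exhibiting A_max as a retract of A. -/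
open MulOpposite

/-- A rook-Brauer `n`-diagram: two columns of `n` nodes (left = `Sum.inl`,
right = `Sum.inr`), where each node is connected to at most one other node. -/
structure Diagram (n : ℕ) : Type where
  pair : Fin n ⊕ Fin n → Option (Fin n ⊕ Fin n)
  symm : ∀ u v, pair u = some v → pair v = some u
  irrefl : ∀ u, pair u ≠ some u

namespace Diagram

variable {n : ℕ}

/-- Nodes of the concatenation of two diagrams: left, middle and right column. -/
abbrev CNode (n : ℕ) : Type := Fin n ⊕ (Fin n ⊕ Fin n)

/-- Embedding of the nodes of the first diagram into the concatenation. -/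
def eLM : Fin n ⊕ Fin n → CNode n :=
  Sum.elim Sum.inl (fun a => Sum.inr (Sum.inl a))

/-- Embedding of the nodes of the second diagram into the concatenation. -/
def eMR : Fin n ⊕ Fin n → CNode n :=
  Sum.elim (fun a => Sum.inr (Sum.inl a)) (fun a => Sum.inr (Sum.inr a))

/-- Embedding of the boundary (outer) nodes into the concatenation. -/
def eB : Fin n ⊕ Fin n → CNode n :=
  Sum.elim Sum.inl (fun a => Sum.inr (Sum.inr a))

/-- A middle node of the concatenation. -/
def mid (a : Fin n) : CNode n := Sum.inr (Sum.inl a)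

/-- The edges of the concatenation of the diagrams `x` and `y`. -/
def cEdge (x y : Diagram n) : CNode n → CNode n → Prop := fun u v =>
  (∃ p q, x.pair p = some q ∧ eLM p = u ∧ eLM q = v) ∨
  (∃ p q, y.pair p = some q ∧ eMR p = u ∧ eMR q = v)

/-- Connectivity in the concatenation of the diagrams `x` and `y`. -/
def cConn (x y : Diagram n) : CNode n → CNode n → Prop :=
  Relation.EqvGen (cEdge x y)

/-- `ConcatEq x y z` says that `z` is the underlying diagram of the product
`x · y`: two boundary nodes are joined in `z` exactly when they are distinct
and connected through the concatenation of `x` and `y`. -/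
def ConcatEq (x y z : Diagram n) : Prop :=
  ∀ u v, z.pair u = some v ↔ (u ≠ v ∧ cConn x y (eB u) (eB v))

/-- A middle node not connected to any boundary node. -/
def midIsolated (x y : Diagram n) (a : Fin n) : Prop :=
  ∀ u : Fin n ⊕ Fin n, ¬ cConn x y (eB u) (mid a)

/-- The middle node `a` has valence two in the concatenation. -/
def degTwo (x y : Diagram n) (a : Fin n) : Prop :=
  (∃ p, x.pair (Sum.inr a) = some p) ∧ (∃ q, y.pair (Sum.inl a) = some q)

/-- A middle node lying on a loop of the concatenation. -/
def isLoopNode (x y : Diagram n) (a : Fin n) : Prop :=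
  midIsolated x y a ∧ ∀ b : Fin n, cConn x y (mid a) (mid b) → degTwo x y b

/-- A middle node lying on a contractible isolated component of the concatenation. -/
def isFreeNode (x y : Diagram n) (a : Fin n) : Prop :=
  midIsolated x y a ∧ ¬ (∀ b : Fin n, cConn x y (mid a) (mid b) → degTwo x y b)

/-- The number of loops formed in the middle when concatenating `x` and `y`. -/
noncomputable def loopCount (x y : Diagram n) : ℕ :=
  Nat.card (Quot (fun a b : {a : Fin n // isLoopNode x y a} =>
    cConn x y (mid a.1) (mid b.1)))

/-- The number of contractible isolated components formed in the middle when
concatenating `x` and `y`. -/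
noncomputable def freeCount (x y : Diagram n) : ℕ :=
  Nat.card (Quot (fun a b : {a : Fin n // isFreeNode x y a} =>
    cConn x y (mid a.1) (mid b.1)))

/-- The number of left-to-right connections of a diagram. -/
noncomputable def lrCount (d : Diagram n) : ℕ :=
  Nat.card {p : Fin n × Fin n // d.pair (Sum.inl p.1) = some (Sum.inr p.2)}

/-- The identity diagram. -/
def idDiagram (n : ℕ) : Diagram n where
  pair := Sum.elim (fun a => some (Sum.inr a)) (fun a => some (Sum.inl a))
  symm := by rintro (a | a) (b | b) h <;> simp_all
  irrefl := by rintro (a | a) h <;> simp_all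

/-- A rook diagram: no left-to-left or right-to-right connections. -/
def IsRook (d : Diagram n) : Prop :=
  ∀ a b : Fin n,
    d.pair (Sum.inl a) ≠ some (Sum.inl b) ∧ d.pair (Sum.inr a) ≠ some (Sum.inr b)

/-- A Brauer diagram: no missing edges. -/
def IsBrauer (d : Diagram n) : Prop := ∀ u, (d.pair u).isSome

/-- Position of a node on the boundary circle (left column top to bottom,
then right column bottom to top). -/
def circPos (n : ℕ) : Fin n ⊕ Fin n → ℕ :=
  Sum.elim (fun a => (a : ℕ)) (fun a => 2 * n - 1 - (a : ℕ))

/-- A planar diagram: no two edges cross. -/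
def IsPlanar (d : Diagram n) : Prop :=
  ¬ ∃ u v w t, d.pair u = some v ∧ d.pair w = some t ∧
      circPos n u < circPos n w ∧ circPos n w < circPos n v ∧ circPos n v < circPos n t

/-- A permutation diagram: every node on either side is connected to a node
on the other side (no missing edges and no left-to-left or right-to-right
connections). -/
def IsPerm (d : Diagram n) : Prop :=
  ∀ a : Fin n, (∃ b, d.pair (Sum.inl a) = some (Sum.inr b)) ∧
    (∃ b, d.pair (Sum.inr a) = some (Sum.inl b))

/-- The diagram of a permutation `σ`: right node `i` is connected to
left node `σ i`. -/
def permDiagram (n : ℕ) (σ : Equiv.Perm (Fin n)) : Diagram n where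
  pair := Sum.elim (fun a => some (Sum.inr (σ.symm a))) (fun a => some (Sum.inl (σ a)))
  symm := by
    rintro (a | a) (b | b) h <;> simp_all
    · rw [← h, Equiv.apply_symm_apply]
    · rw [← h, Equiv.symm_apply_apply]
  irrefl := by rintro (a | a) h <;> simp_all

/-- The diagram obtained from the identity diagram by deleting the `i`-th strand. -/
def rho (n : ℕ) (i : Fin n) : Diagram n where
  pair := Sum.elim (fun a => if a = i then none else some (Sum.inr a))
    (fun a => if a = i then none else some (Sum.inl a))
  symm := by
    rintro (a | a) (b | b) h <;>
        simp only [Sum.elim_inl, Sum.elim_inr] at h ⊢ <;>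
        split_ifs at h <;> simp_all
  irrefl := by
    rintro (a | a) h <;> simp only [Sum.elim_inl, Sum.elim_inr] at h <;>
      split_ifs at h <;> simp_all

lemma isRook_rho (n : ℕ) (i : Fin n) : IsRook (rho n i) := by
  intro a b
  constructor
  · show (if a = i then none else some (Sum.inr a) : Option _) ≠ _
    split_ifs <;> simp
  · show (if a = i then none else some (Sum.inl a) : Option _) ≠ _
    split_ifs <;> simp

end Diagram

open Diagram

/-- `IsDiagramAlgebra R n δ ε P A` says that `A` is (a model of) the subalgebra
of the rook-Brauer algebra `RBr_n(δ, ε)` over `R` spanned by the diagrams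
satisfying `P`: it is free as an `R`-module on those diagrams, the identity
diagram is the unit, and multiplication of basis diagrams is given by
concatenation, with a factor `δ` for each middle loop and a factor `ε` for
each contractible isolated middle component. -/
structure IsDiagramAlgebra (R : Type) [CommRing R] (n : ℕ) (δ ε : R)
    (P : Diagram n → Prop) (A : Type) [Ring A] [Algebra R A] : Type where
  basis : Module.Basis {d : Diagram n // P d} R A
  id_mem : P (idDiagram n)
  basis_one : basis ⟨idDiagram n, id_mem⟩ = 1
  concat_exists : ∀ x y : {d : Diagram n // P d}, ∃ z : Diagram n, ConcatEq x.1 y.1 z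
  concat_mem : ∀ (x y : {d : Diagram n // P d}) (z : Diagram n),
    ConcatEq x.1 y.1 z → P z
  basis_mul : ∀ (x y z : {d : Diagram n // P d}), ConcatEq x.1 y.1 z.1 →
    basis x * basis y = (δ ^ loopCount x.1 y.1 * ε ^ freeCount x.1 y.1) • basis z

/-!
A diagram with `n` left-to-right connections is a permutation diagram, and concatenating two
permutation diagrams creates no middle components, so these diagrams multiply as in `Σ_n`. The
permutations whose diagrams lie in `A` form a submonoid, hence a subgroup `G`, of the finite group
`Σ_n`, and `RG → A` is the induced algebra map. Concatenation never increases the number of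
left-to-right connections, so the remaining diagrams span a two-sided ideal, and taking the
coefficients at the permutation diagrams is an algebra retraction `A → RG` with that kernel.
-/

theorem Relation.EqvGen.eq_or_symmGen_both {α : Type*} {r : α → α → Prop} {a b : α}
    (h : Relation.EqvGen r a b) :
    a = b ∨ (∃ c, Relation.SymmGen r a c) ∧ ∃ c, Relation.SymmGen r b c := by
  induction h with
  | rel x y hr => exact Or.inr ⟨⟨y, Or.inl hr⟩, ⟨x, Or.inr hr⟩⟩
  | refl x => exact Or.inl rfl
  | symm x y _ ih => exact ih.imp Eq.symm And.symm
  | trans x y z _ _ ih₁ ih₂ =>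
    rcases ih₁ with rfl | ⟨hx, hy⟩
    · exact ih₂
    · rcases ih₂ with rfl | ⟨-, hz⟩
      exacts [Or.inr ⟨hx, hy⟩, Or.inr ⟨hx, hz⟩]

theorem Submonoid.inv_mem_of_finite {G : Type*} [Group G] [Finite G] (M : Submonoid G)
    {x : G} (hx : x ∈ M) : x⁻¹ ∈ M :=
  Submonoid.powers_le.2 hx <| (isOfFinOrder_of_finite x).mem_powers_iff_mem_zpowers.2 <|
    Subgroup.inv_mem _ (Subgroup.mem_zpowers x)

namespace Diagram

variable {n : ℕ}

theorem pair_injective : Function.Injective (pair : Diagram n → _) := by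
  rintro ⟨p, _, _⟩ ⟨q, _, _⟩ (rfl : p = q)
  rfl

theorem permDiagram_injective : Function.Injective (permDiagram n) := by
  intro σ τ h
  refine Equiv.ext fun a => ?_
  simpa [permDiagram] using congrArg (fun d : Diagram n => d.pair (Sum.inr a)) h

theorem permDiagram_one : permDiagram n 1 = idDiagram n :=
  pair_injective <| funext fun u => by rcases u with a | a <;> rfl

theorem lrCount_eq_card_left (d : Diagram n) :
    lrCount d = Nat.card {a : Fin n // ∃ b, d.pair (Sum.inl a) = some (Sum.inr b)} := by
  refine Nat.card_congr (Equiv.ofBijective (fun p => ⟨p.1.1, p.1.2, p.2⟩) ⟨?_, ?_⟩)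
  · rintro ⟨⟨a, b⟩, hb⟩ ⟨⟨a', b'⟩, hb'⟩ h
    obtain rfl : a = a' := congrArg Subtype.val h
    rw [hb] at hb'
    simp_all
  · rintro ⟨a, b, hb⟩
    exact ⟨⟨(a, b), hb⟩, rfl⟩

theorem lrCount_eq_card_right (d : Diagram n) :
    lrCount d = Nat.card {b : Fin n // ∃ a, d.pair (Sum.inl a) = some (Sum.inr b)} := by
  refine Nat.card_congr (Equiv.ofBijective (fun p => ⟨p.1.2, p.1.1, p.2⟩) ⟨?_, ?_⟩)
  · rintro ⟨⟨a, b⟩, hb⟩ ⟨⟨a', b'⟩, hb'⟩ h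
    obtain rfl : b = b' := congrArg Subtype.val h
    have := (d.symm _ _ hb).symm.trans (d.symm _ _ hb')
    simp_all
  · rintro ⟨b, a, hb⟩
    exact ⟨⟨(a, b), hb⟩, rfl⟩

theorem lrCount_le (d : Diagram n) : lrCount d ≤ n := by
  rw [lrCount_eq_card_left]
  exact (Finite.card_subtype_le _).trans_eq (Nat.card_fin n)

theorem lrCount_permDiagram (σ : Equiv.Perm (Fin n)) : lrCount (permDiagram n σ) = n := by
  simp [lrCount_eq_card_left, permDiagram]

theorem exists_permDiagram_eq_of_lrCount_eq {d : Diagram n} (hd : lrCount d = n) :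
    ∃ σ, permDiagram n σ = d := by
  have hleft : ∀ a, ∃ b, d.pair (Sum.inl a) = some (Sum.inr b) := by
    have hbij := (Nat.bijective_iff_injective_and_card
      (Subtype.val : {a : Fin n // ∃ b, d.pair (Sum.inl a) = some (Sum.inr b)} → Fin n)).2
      ⟨Subtype.val_injective, by rw [← lrCount_eq_card_left, hd, Nat.card_fin]⟩
    intro a
    obtain ⟨x, rfl⟩ := hbij.2 a
    exact x.2
  choose f hf using hleft
  have hf_inj : Function.Injective f := fun a a' h => by
    have := (d.symm _ _ (hf a)).symm.trans (h ▸ d.symm _ _ (hf a'))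
    simpa using this
  let σ := (Equiv.ofBijective f hf_inj.bijective_of_finite).symm
  refine ⟨σ, pair_injective <| funext fun u => ?_⟩
  rcases u with a | b
  · exact (hf a).symm
  · have := d.symm _ _ (hf (σ b))
    rw [show f (σ b) = b from (Equiv.ofBijective f _).apply_symm_apply b] at this
    exact this.symm

/-- Each node of the concatenation of `σ` and `τ` is labelled by the left boundary node at
the end of its strand. -/
def permStrandEnd (σ τ : Equiv.Perm (Fin n)) : CNode n → Fin n :=
  Sum.elim id (Sum.elim σ (σ ∘ τ))

theorem permStrandEnd_eq_of_cConn (σ τ : Equiv.Perm (Fin n)) {u v : CNode n}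
    (h : cConn (permDiagram n σ) (permDiagram n τ) u v) :
    permStrandEnd σ τ u = permStrandEnd σ τ v := by
  induction h with
  | rel u v huv =>
    rcases huv with ⟨p, q, hpq, rfl, rfl⟩ | ⟨p, q, hpq, rfl, rfl⟩ <;>
      rcases p with p | p <;> rcases q with q | q <;>
      simp only [permDiagram, Sum.elim_inl, Sum.elim_inr, Option.some.injEq,
        Sum.inl.injEq, Sum.inr.injEq, reduceCtorEq] at hpq <;>
      subst hpq <;> simp [permStrandEnd, eLM, eMR]
  | refl => rfl
  | symm _ _ _ ih => exact ih.symm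
  | trans _ _ _ _ _ ih₁ ih₂ => exact ih₁.trans ih₂

theorem concatEq_permDiagram (σ τ : Equiv.Perm (Fin n)) :
    ConcatEq (permDiagram n σ) (permDiagram n τ) (permDiagram n (σ * τ)) := by
  intro u v
  constructor
  · intro huv
    refine ⟨fun h => (permDiagram n (σ * τ)).irrefl u (h ▸ huv), ?_⟩
    rcases u with a | a <;> simp only [permDiagram, Sum.elim_inl, Sum.elim_inr,
      Option.some.injEq] at huv <;> subst huv
    · have e₁ : cEdge (permDiagram n σ) (permDiagram n τ) (eB (.inl a)) (mid (σ.symm a)) :=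
        Or.inl ⟨.inl a, .inr (σ.symm a), by simp [permDiagram], rfl, rfl⟩
      have e₂ : cEdge (permDiagram n σ) (permDiagram n τ) (mid (σ.symm a))
          (eB (.inr ((σ * τ).symm a))) :=
        Or.inr ⟨.inl (σ.symm a), .inr (τ.symm (σ.symm a)), by simp [permDiagram], rfl, rfl⟩
      exact (Relation.EqvGen.rel _ _ e₁).trans _ _ _ (Relation.EqvGen.rel _ _ e₂)
    · have e₁ : cEdge (permDiagram n σ) (permDiagram n τ) (eB (.inr a)) (mid (τ a)) :=
        Or.inr ⟨.inr a, .inl (τ a), by simp [permDiagram], rfl, rfl⟩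
      have e₂ : cEdge (permDiagram n σ) (permDiagram n τ) (mid (τ a))
          (eB (.inl ((σ * τ) a))) :=
        Or.inl ⟨.inr (τ a), .inl (σ (τ a)), by simp [permDiagram], rfl, rfl⟩
      exact (Relation.EqvGen.rel _ _ e₁).trans _ _ _ (Relation.EqvGen.rel _ _ e₂)
  · rintro ⟨hne, hconn⟩
    have hend := permStrandEnd_eq_of_cConn σ τ hconn
    rcases u with a | a <;> rcases v with b | b <;>
      simp only [permStrandEnd, eB, Sum.elim_inl, Sum.elim_inr, id, Function.comp_apply]
        at hend
    · exact absurd (congrArg _ hend) hne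
    · simpa [permDiagram, hend] using (σ * τ).symm_apply_apply b
    · simp [permDiagram, ← hend]
    · exact absurd (congrArg _ (τ.injective (σ.injective hend))) hne

theorem not_midIsolated_permDiagram (σ τ : Equiv.Perm (Fin n)) (a : Fin n) :
    ¬ midIsolated (permDiagram n σ) (permDiagram n τ) a := fun h =>
  h (.inl (σ a)) <| Relation.EqvGen.rel _ _ <|
    Or.inl ⟨.inl (σ a), .inr a, by simp [permDiagram], rfl, rfl⟩

theorem loopCount_permDiagram (σ τ : Equiv.Perm (Fin n)) :
    loopCount (permDiagram n σ) (permDiagram n τ) = 0 := by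
  have : IsEmpty {a // isLoopNode (permDiagram n σ) (permDiagram n τ) a} :=
    ⟨fun a => not_midIsolated_permDiagram σ τ a.1 a.2.1⟩
  exact Nat.card_of_isEmpty

theorem freeCount_permDiagram (σ τ : Equiv.Perm (Fin n)) :
    freeCount (permDiagram n σ) (permDiagram n τ) = 0 := by
  have : IsEmpty {a // isFreeNode (permDiagram n σ) (permDiagram n τ) a} :=
    ⟨fun a => not_midIsolated_permDiagram σ τ a.1 a.2.1⟩
  exact Nat.card_of_isEmpty

section Concat

variable {x y z : Diagram n}

theorem exists_pair_inl_of_symmGen_cEdge {u : Fin n} {w : CNode n}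
    (h : Relation.SymmGen (cEdge x y) (eB (.inl u)) w) : ∃ p, x.pair (.inl u) = some p := by
  rcases h with (⟨p, q, hpq, hp, -⟩ | ⟨p, q, -, hp, -⟩) |
    (⟨p, q, hpq, -, hq⟩ | ⟨p, q, -, -, hq⟩)
  · rcases p with p | p <;> simp only [eLM, eB, Sum.elim_inl, Sum.elim_inr, Sum.inl.injEq,
      reduceCtorEq] at hp
    exact ⟨q, hp ▸ hpq⟩
  · rcases p with p | p <;> simp [eMR, eB] at hp
  · rcases q with q | q <;> simp only [eLM, eB, Sum.elim_inl, Sum.elim_inr, Sum.inl.injEq,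
      reduceCtorEq] at hq
    exact ⟨p, x.symm _ _ (hq ▸ hpq)⟩
  · rcases q with q | q <;> simp [eMR, eB] at hq

theorem exists_pair_inr_of_symmGen_cEdge {v : Fin n} {w : CNode n}
    (h : Relation.SymmGen (cEdge x y) (eB (.inr v)) w) : ∃ p, y.pair (.inr v) = some p := by
  rcases h with (⟨p, q, -, hp, -⟩ | ⟨p, q, hpq, hp, -⟩) |
    (⟨p, q, -, -, hq⟩ | ⟨p, q, hpq, -, hq⟩)
  · rcases p with p | p <;> simp [eLM, eB] at hp
  · rcases p with p | p <;> simp only [eMR, eB, Sum.elim_inl, Sum.elim_inr, Sum.inr.injEq,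
      reduceCtorEq] at hp
    exact ⟨q, hp ▸ hpq⟩
  · rcases q with q | q <;> simp [eLM, eB] at hq
  · rcases q with q | q <;> simp only [eMR, eB, Sum.elim_inl, Sum.elim_inr, Sum.inr.injEq,
      reduceCtorEq] at hq
    exact ⟨p, y.symm _ _ (hq ▸ hpq)⟩

theorem ConcatEq.exists_pair_inl_left (hz : ConcatEq x y z) {u v : Fin n}
    (huv : z.pair (.inl u) = some (.inr v)) : ∃ m, x.pair (.inl u) = some (.inr m) := by
  obtain ⟨-, hconn⟩ := (hz _ _).1 huv
  obtain ⟨p, hp⟩ : ∃ p, x.pair (.inl u) = some p := by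
    rcases hconn.eq_or_symmGen_both with heq | ⟨⟨w, hw⟩, -⟩
    · simp [eB] at heq
    · exact exists_pair_inl_of_symmGen_cEdge hw
  rcases p with w | m
  -- an `x`-edge joining two left nodes would survive as an edge of `z`
  · have := (hz (.inl u) (.inl w)).2
      ⟨by rintro ⟨⟩; exact x.irrefl _ hp, .rel _ _ (Or.inl ⟨_, _, hp, rfl, rfl⟩)⟩
    simp [huv] at this
  · exact ⟨m, hp⟩

theorem ConcatEq.exists_pair_inl_right (hz : ConcatEq x y z) {u v : Fin n}
    (huv : z.pair (.inl u) = some (.inr v)) : ∃ m, y.pair (.inl m) = some (.inr v) := by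
  have hvu := z.symm _ _ huv
  obtain ⟨-, hconn⟩ := (hz _ _).1 hvu
  obtain ⟨p, hp⟩ : ∃ p, y.pair (.inr v) = some p := by
    rcases hconn.eq_or_symmGen_both with heq | ⟨⟨w, hw⟩, -⟩
    · simp [eB] at heq
    · exact exists_pair_inr_of_symmGen_cEdge hw
  rcases p with m | w
  · exact ⟨m, y.symm _ _ hp⟩
  · have := (hz (.inr v) (.inr w)).2
      ⟨by rintro ⟨⟩; exact y.irrefl _ hp, .rel _ _ (Or.inr ⟨_, _, hp, rfl, rfl⟩)⟩
    simp [hvu] at this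

theorem ConcatEq.lrCount_le_left (hz : ConcatEq x y z) : lrCount z ≤ lrCount x := by
  rw [lrCount_eq_card_left, lrCount_eq_card_left]
  exact Nat.card_le_card_of_injective _
    (Subtype.impEmbedding _ _ fun _ ⟨_, hb⟩ => hz.exists_pair_inl_left hb).injective

theorem ConcatEq.lrCount_le_right (hz : ConcatEq x y z) : lrCount z ≤ lrCount y := by
  rw [lrCount_eq_card_right, lrCount_eq_card_right]
  exact Nat.card_le_card_of_injective _
    (Subtype.impEmbedding _ _ fun _ ⟨_, ha⟩ => hz.exists_pair_inl_right ha).injective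

end Concat

end Diagram

namespace IsDiagramAlgebra

open Diagram

variable {R A : Type} [CommRing R] [Ring A] [Algebra R A] {n : ℕ} {δ ε : R}
  {P : Diagram n → Prop} (h : IsDiagramAlgebra R n δ ε P A)

def permSubmonoid : Submonoid (Equiv.Perm (Fin n)) where
  carrier := {σ | P (permDiagram n σ)}
  one_mem' := by simpa [permDiagram_one] using h.id_mem
  mul_mem' hσ hτ := h.concat_mem ⟨_, hσ⟩ ⟨_, hτ⟩ _ (concatEq_permDiagram _ _)

def permGroup : Subgroup (Equiv.Perm (Fin n)) :=
  { h.permSubmonoid with inv_mem' := h.permSubmonoid.inv_mem_of_finite }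

def permIndex (g : h.permGroup) : {d : Diagram n // P d} := ⟨permDiagram n g, g.2⟩

theorem permIndex_injective : Function.Injective h.permIndex := fun _ _ hg =>
  Subtype.ext (permDiagram_injective (congrArg Subtype.val hg))

theorem mem_range_permIndex_iff {d : {d : Diagram n // P d}} :
    d ∈ Set.range h.permIndex ↔ lrCount d.1 = n := by
  constructor
  · rintro ⟨g, rfl⟩
    exact lrCount_permDiagram _
  · intro hd
    obtain ⟨σ, hσ⟩ := exists_permDiagram_eq_of_lrCount_eq hd
    exact ⟨⟨σ, show P (permDiagram n σ) from hσ ▸ d.2⟩, Subtype.ext hσ⟩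

theorem lrCount_lt_iff_notMem_range_permIndex {d : {d : Diagram n // P d}} :
    lrCount d.1 < n ↔ d ∉ Set.range h.permIndex := by
  rw [mem_range_permIndex_iff]
  exact (lrCount_le _).lt_iff_ne

theorem basis_permIndex_mul (g g' : h.permGroup) :
    h.basis (h.permIndex g) * h.basis (h.permIndex g') = h.basis (h.permIndex (g * g')) := by
  rw [h.basis_mul _ _ (h.permIndex (g * g')) (concatEq_permDiagram g.1 g'.1)]
  simp [permIndex, loopCount_permDiagram, freeCount_permDiagram]

noncomputable def permHom : h.permGroup →* A where
  toFun g := h.basis (h.permIndex g)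
  map_one' := by
    rw [← h.basis_one]
    exact congrArg h.basis (Subtype.ext permDiagram_one)
  map_mul' g g' := (h.basis_permIndex_mul g g').symm

noncomputable def groupAlgebraHom : MonoidAlgebra R h.permGroup →ₐ[R] A :=
  MonoidAlgebra.lift R A _ h.permHom

theorem groupAlgebraHom_single_one (g : h.permGroup) :
    h.groupAlgebraHom (MonoidAlgebra.single g 1) = h.basis (h.permIndex g) := by
  simp [groupAlgebraHom, MonoidAlgebra.lift_single, permHom]

noncomputable def retractionₗ : A →ₗ[R] MonoidAlgebra R h.permGroup :=
  (MonoidAlgebra.basis h.permGroup R).repr.symm.toLinearMap ∘ₗ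
    Finsupp.lcomapDomain h.permIndex h.permIndex_injective ∘ₗ h.basis.repr.toLinearMap

theorem retractionₗ_eq_zero_iff (a : A) :
    h.retractionₗ a = 0 ↔ ∀ g, h.basis.repr a (h.permIndex g) = 0 := by
  simp only [retractionₗ, LinearMap.comp_apply, LinearEquiv.coe_coe,
    LinearEquiv.map_eq_zero_iff, Finsupp.ext_iff, Finsupp.lcomapDomain_apply,
    Finsupp.comapDomain_apply, Finsupp.coe_zero, Pi.zero_apply]

theorem retractionₗ_basis_permIndex (g : h.permGroup) :
    h.retractionₗ (h.basis (h.permIndex g)) = MonoidAlgebra.single g 1 := by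
  simp [retractionₗ]

theorem retractionₗ_basis_of_lrCount_lt {d : {d : Diagram n // P d}} (hd : lrCount d.1 < n) :
    h.retractionₗ (h.basis d) = 0 := by
  rw [retractionₗ_eq_zero_iff, h.basis.repr_self]
  exact fun g => Finsupp.single_eq_of_ne fun hg =>
    h.lrCount_lt_iff_notMem_range_permIndex.1 hd ⟨g, hg⟩

theorem retractionₗ_basis_mul_of_lrCount_lt {x y : {d : Diagram n // P d}}
    (hxy : lrCount x.1 < n ∨ lrCount y.1 < n) : h.retractionₗ (h.basis x * h.basis y) = 0 := by
  obtain ⟨z, hz⟩ := h.concat_exists x y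
  rw [h.basis_mul x y ⟨z, h.concat_mem x y z hz⟩ hz, map_smul,
    h.retractionₗ_basis_of_lrCount_lt, smul_zero]
  rcases hxy with hx | hy
  exacts [hz.lrCount_le_left.trans_lt hx, hz.lrCount_le_right.trans_lt hy]

theorem retractionₗ_basis_mul (x y : {d : Diagram n // P d}) :
    h.retractionₗ (h.basis x * h.basis y) =
      h.retractionₗ (h.basis x) * h.retractionₗ (h.basis y) := by
  by_cases hxy : lrCount x.1 < n ∨ lrCount y.1 < n
  · rw [h.retractionₗ_basis_mul_of_lrCount_lt hxy]
    rcases hxy with hx | hy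
    · rw [h.retractionₗ_basis_of_lrCount_lt hx, zero_mul]
    · rw [h.retractionₗ_basis_of_lrCount_lt hy, mul_zero]
  · rw [not_or, not_lt, not_lt] at hxy
    obtain ⟨g, rfl⟩ := h.mem_range_permIndex_iff.2 (hxy.1.antisymm' (lrCount_le _))
    obtain ⟨g', rfl⟩ := h.mem_range_permIndex_iff.2 (hxy.2.antisymm' (lrCount_le _))
    simp only [basis_permIndex_mul, retractionₗ_basis_permIndex, MonoidAlgebra.single_mul_single,
      mul_one]

noncomputable def retraction : A →ₐ[R] MonoidAlgebra R h.permGroup :=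
  AlgHom.ofLinearMap h.retractionₗ
    (by rw [← map_one h.permHom, permHom, MonoidHom.coe_mk, OneHom.coe_mk,
      retractionₗ_basis_permIndex, MonoidAlgebra.one_def])
    ((LinearMap.map_mul_iff _).2 <| h.basis.ext fun x => h.basis.ext fun y => by
      simpa using h.retractionₗ_basis_mul x y)

theorem retraction_comp_groupAlgebraHom :
    h.retraction.comp h.groupAlgebraHom = AlgHom.id R (MonoidAlgebra R h.permGroup) :=
  MonoidAlgebra.algHom_ext (fun g => by
    simp [retraction, groupAlgebraHom_single_one, retractionₗ_basis_permIndex])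
    (Subsingleton.elim _ _)

theorem groupAlgebraHom_injective : Function.Injective h.groupAlgebraHom :=
  Function.LeftInverse.injective (g := h.retraction) fun a => by
    simpa using AlgHom.congr_fun h.retraction_comp_groupAlgebraHom a

theorem range_groupAlgebraHom : Set.range h.groupAlgebraHom =
    Submodule.span R (h.basis '' {d | lrCount d.1 = n}) := by
  have hbasis : h.groupAlgebraHom ∘ MonoidAlgebra.basis h.permGroup R = h.basis ∘ h.permIndex :=
    funext fun g => by simp [groupAlgebraHom_single_one]
  have hrange : {d | lrCount d.1 = n} = Set.range h.permIndex :=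
    Set.ext fun _ => h.mem_range_permIndex_iff.symm
  change Set.range h.groupAlgebraHom.toLinearMap = _
  rw [← LinearMap.coe_range, LinearMap.range_eq_map, ← (MonoidAlgebra.basis _ R).span_eq,
    Submodule.map_span, ← Set.range_comp, AlgHom.coe_toLinearMap, hbasis, Set.range_comp, hrange]

theorem retraction_eq_zero_iff (a : A) : h.retraction a = 0 ↔
    a ∈ Submodule.span R (h.basis '' {d | lrCount d.1 < n}) := by
  have hlt : {d | lrCount d.1 < n} = (Set.range h.permIndex)ᶜ :=
    Set.ext fun _ => h.lrCount_lt_iff_notMem_range_permIndex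
  rw [hlt, h.basis.mem_span_image, show h.retraction a = h.retractionₗ a from rfl,
    retractionₗ_eq_zero_iff]
  constructor
  · rintro ha d hd ⟨g, rfl⟩
    exact Finsupp.mem_support_iff.1 hd (ha g)
  · intro ha g
    by_contra hg
    exact ha (Finsupp.mem_support_iff.2 hg) ⟨g, rfl⟩

end IsDiagramAlgebra

open Diagram in
theorem canonical_group_algebra_retract_general (R A : Type) [CommRing R] [Ring A]
    [Algebra R A] (n : ℕ) (δ ε : R) (P : Diagram n → Prop)
    (h : IsDiagramAlgebra R n δ ε P A) :
    ∃ (G : Subgroup (Equiv.Perm (Fin n)))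
      (f : MonoidAlgebra R G →ₐ[R] A) (π : A →ₐ[R] MonoidAlgebra R G),
      Function.Injective f ∧
      Set.range f = (Submodule.span R
        {x : A | ∃ d : {d : Diagram n // P d}, lrCount d.1 = n ∧ x = h.basis d} : Set A) ∧
      π.comp f = AlgHom.id R (MonoidAlgebra R G) ∧
      (∀ a : A, π a = 0 ↔ a ∈ Submodule.span R
        {x : A | ∃ d : {d : Diagram n // P d}, lrCount d.1 < n ∧ x = h.basis d}) := by
  have basis_image (p : ℕ → Prop) :
      {x : A | ∃ d : {d : Diagram n // P d}, p (lrCount d.1) ∧ x = h.basis d} =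
        h.basis '' {d | p (lrCount d.1)} := by
    ext x
    simp [eq_comm]
  refine ⟨h.permGroup, h.groupAlgebraHom, h.retraction, h.groupAlgebraHom_injective, ?_,
    h.retraction_comp_groupAlgebraHom, fun a => ?_⟩
  · rw [basis_image (· = n), h.range_groupAlgebraHom]
  · rw [basis_image (· < n), h.retraction_eq_zero_iff]

open Diagram in
/-- Let `A` be a subalgebra of the rook-Brauer algebra `RBr_n(δ, ε)` that is free
as an `R`-module on a subset of the rook-Brauer diagrams (those satisfying `P`)
and contains at least one diagram with the maximum number `n` of left-to-right
connections.  Let `A_max` be the `R`-span of the diagrams in `A` with exactly `n`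
left-to-right connections, and let `A ∩ I_{n−1}` be the span of the diagrams in
`A` with fewer than `n` left-to-right connections.  Then `A_max` is a subalgebra
of `A` isomorphic to the group ring `RG` for some subgroup `G ≤ Σ_n`, and the
composite `A_max → A → A/(A ∩ I_{n−1})` is an algebra isomorphism, exhibiting
`A_max` as a retract of `A`; this is expressed by an injective algebra map
`f : RG → A` with image `A_max` and a retraction `π : A → RG` with
`π ∘ f = id` whose kernel is exactly `A ∩ I_{n−1}`. -/
theorem canonical_group_algebra_retract (R A : Type) [CommRing R] [Ring A]
    [Algebra R A] (n : ℕ) (δ ε : R) (P : Diagram n → Prop)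
    (h : IsDiagramAlgebra R n δ ε P A)
    (hmax : ∃ d : Diagram n, P d ∧ lrCount d = n) :
    ∃ (G : Subgroup (Equiv.Perm (Fin n)))
      (f : MonoidAlgebra R G →ₐ[R] A) (π : A →ₐ[R] MonoidAlgebra R G),
      Function.Injective f ∧
      Set.range f = (Submodule.span R
        {x : A | ∃ d : {d : Diagram n // P d}, lrCount d.1 = n ∧ x = h.basis d} : Set A) ∧
      π.comp f = AlgHom.id R (MonoidAlgebra R G) ∧
      (∀ a : A, π a = 0 ↔ a ∈ Submodule.span R
        {x : A | ∃ d : {d : Diagram n // P d}, lrCount d.1 < n ∧ x = h.basis d}) :=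
  canonical_group_algebra_retract_general R A n δ ε P h
end

section
/- In the rook algebra R_n(ε), the left ideal R_n(ε)·ρ_i has R-basis consisting of exactly those rook diagrams in which the i-th node on the right is not connected to any node on the left. -/
open MulOpposite

open Diagram

/-!
For a rook diagram `x`, every strand of `x ∘ ρ_i` entering the middle column leaves it straight
through `ρ_i`, except at node `i`; so `x · ρ_i` is a scalar multiple of `x` with its strand at the
right node `i` removed, and in particular its right node `i` is vacant. Conversely, a rook diagram
`d` whose right node `i` is vacant also has a vacant left node `j` (an injective map of a finite
set into itself is onto), and joining `j` to `i` gives a rook diagram `d'` with `d' · ρ_i = d` on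
the nose: every middle node of `d' ∘ ρ_i` reaches the boundary, so no loops or free components
arise.
-/

namespace Diagram

variable {n : ℕ}

theorem ext {d d' : Diagram n} (h : d.pair = d'.pair) : d = d' := by
  cases d; cases d'; congr

theorem rho_pair_inl (i a : Fin n) :
    (rho n i).pair (Sum.inl a) = if a = i then none else some (Sum.inr a) := rfl

theorem rho_pair_inr (i a : Fin n) :
    (rho n i).pair (Sum.inr a) = if a = i then none else some (Sum.inl a) := rfl

def eraseRight (x : Diagram n) (i : Fin n) : Diagram n where
  pair u := if u = Sum.inr i ∨ x.pair u = some (Sum.inr i) then none else x.pair u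
  symm u v h := by
    split_ifs at h with hu
    obtain ⟨hui, hux⟩ := not_or.mp hu
    have hvu := x.symm u v h
    rw [if_neg]
    · exact hvu
    · rintro (rfl | hv)
      · exact hux h
      · exact hui (Option.some_injective _ (hvu.symm.trans hv))
  irrefl u h := by
    split_ifs at h
    exact x.irrefl u h

theorem eraseRight_pair (x : Diagram n) (i : Fin n) (u : Fin n ⊕ Fin n) :
    (x.eraseRight i).pair u =
      if u = Sum.inr i ∨ x.pair u = some (Sum.inr i) then none else x.pair u := rfl

theorem eraseRight_pair_eq_some {x : Diagram n} {i : Fin n} {u v : Fin n ⊕ Fin n} :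
    (x.eraseRight i).pair u = some v ↔ u ≠ Sum.inr i ∧ v ≠ Sum.inr i ∧ x.pair u = some v := by
  rw [eraseRight_pair]
  split_ifs with hu
  · rcases hu with rfl | hu
    · simp
    · simp only [hu, Option.some.injEq, false_iff]
      exact fun h => h.2.1 h.2.2.symm
  · obtain ⟨hui, hux⟩ := not_or.mp hu
    refine ⟨fun h => ⟨hui, ?_, h⟩, fun h => h.2.2⟩
    rintro rfl
    exact hux h

theorem eraseRight_pair_inr_self (x : Diagram n) (i : Fin n) :
    (x.eraseRight i).pair (Sum.inr i) = none := by
  simp [eraseRight_pair]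

/-- A representative of the connected component of a node in the concatenation of a rook
diagram `x` with `ρ_i`: every component meets the middle column or is a single outer node. -/
def rhoRep (x : Diagram n) (i : Fin n) : CNode n → CNode n
  | Sum.inl a =>
    match x.pair (Sum.inl a) with
    | some (Sum.inr b) => mid b
    | _ => Sum.inl a
  | Sum.inr (Sum.inl b) => mid b
  | Sum.inr (Sum.inr b) => if b = i then Sum.inr (Sum.inr b) else mid b

theorem rhoRep_eq_of_cEdge {x : Diagram n} (hx : IsRook x) (i : Fin n) {u v : CNode n}
    (h : cEdge x (rho n i) u v) : rhoRep x i u = rhoRep x i v := by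
  rcases h with ⟨p, q, hpq, rfl, rfl⟩ | ⟨p, q, hpq, rfl, rfl⟩
  · rcases p with a | a <;> rcases q with b | b
    · exact absurd hpq (hx a b).1
    · simp [rhoRep, eLM, mid, hpq]
    · simp [rhoRep, eLM, mid, x.symm _ _ hpq]
    · exact absurd hpq (hx a b).2
  · rcases p with a | a <;> rcases q with b | b <;>
      simp only [rho_pair_inl, rho_pair_inr] at hpq <;> split_ifs at hpq with hai <;>
      simp_all [rhoRep, eMR, mid]

theorem rhoRep_eq_of_cConn {x : Diagram n} (hx : IsRook x) (i : Fin n) {u v : CNode n}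
    (h : cConn x (rho n i) u v) : rhoRep x i u = rhoRep x i v :=
  congrArg (Quot.lift (rhoRep x i) fun _ _ => rhoRep_eq_of_cEdge hx i) (Quot.eqvGen_sound h)

theorem eq_of_rhoRep_inl_eq {x : Diagram n} {i a b : Fin n}
    (h : rhoRep x i (Sum.inl a) = rhoRep x i (Sum.inl b)) : a = b := by
  rcases ha : x.pair (Sum.inl a) with _ | (c | c) <;>
    rcases hb : x.pair (Sum.inl b) with _ | (d | d) <;>
    simp_all [rhoRep, mid]
  subst h
  simpa using (x.symm _ _ ha).symm.trans (x.symm _ _ hb)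

theorem eq_of_rhoRep_inr_eq {x : Diagram n} {i a b : Fin n}
    (h : rhoRep x i (Sum.inr (Sum.inr a)) = rhoRep x i (Sum.inr (Sum.inr b))) : a = b := by
  simp only [rhoRep] at h
  split_ifs at h <;> simp_all [mid]

theorem eraseRight_pair_inl_of_rhoRep_eq {x : Diagram n} {i a b : Fin n}
    (h : rhoRep x i (Sum.inl a) = rhoRep x i (Sum.inr (Sum.inr b))) :
    (x.eraseRight i).pair (Sum.inl a) = some (Sum.inr b) := by
  rcases hp : x.pair (Sum.inl a) with _ | (c | c) <;> by_cases hbi : b = i <;>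
    simp_all [rhoRep, eraseRight_pair, mid]

theorem concatEq_rho {x : Diagram n} (hx : IsRook x) (i : Fin n) :
    ConcatEq x (rho n i) (x.eraseRight i) := by
  intro u v
  constructor
  · intro huv
    refine ⟨fun e => (x.eraseRight i).irrefl u (e ▸ huv), ?_⟩
    have strand : ∀ a b, x.pair (Sum.inl a) = some (Sum.inr b) → b ≠ i →
        cConn x (rho n i) (eB (Sum.inl a)) (eB (Sum.inr b)) := fun a b hab hbi =>
      .trans _ (mid b) _ (.rel _ _ (Or.inl ⟨_, _, hab, rfl, rfl⟩))
        (.rel _ _ (Or.inr ⟨Sum.inl b, Sum.inr b, by simp [rho_pair_inl, hbi], rfl, rfl⟩))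
    obtain ⟨hui, hvi, hx'⟩ := eraseRight_pair_eq_some.mp huv
    rcases u with a | a <;> rcases v with b | b
    · exact absurd hx' (hx a b).1
    · exact strand a b hx' (by simpa using hvi)
    · exact .symm _ _ (strand b a (x.symm _ _ hx') (by simpa using hui))
    · exact absurd hx' (hx a b).2
  · rintro ⟨hne, hc⟩
    have hrep := rhoRep_eq_of_cConn hx i hc
    rcases u with a | a <;> rcases v with b | b
    · exact absurd (congrArg Sum.inl (eq_of_rhoRep_inl_eq hrep)) hne
    · exact eraseRight_pair_inl_of_rhoRep_eq hrep
    · exact (x.eraseRight i).symm _ _ (eraseRight_pair_inl_of_rhoRep_eq hrep.symm)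
    · exact absurd (congrArg Sum.inr (eq_of_rhoRep_inr_eq hrep)) hne

def addEdge (d : Diagram n) {i j : Fin n} (hi : d.pair (Sum.inr i) = none)
    (hj : d.pair (Sum.inl j) = none) : Diagram n where
  pair u := if u = Sum.inl j then some (Sum.inr i)
    else if u = Sum.inr i then some (Sum.inl j) else d.pair u
  symm u v h := by
    split_ifs at h with huj hui
    · cases h; simp [huj]
    · cases h; simp [hui]
    · have hvu := d.symm _ _ h
      have hvi : v ≠ Sum.inr i := by rintro rfl; simp [hi] at hvu
      have hvj : v ≠ Sum.inl j := by rintro rfl; simp [hj] at hvu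
      simp only [if_neg hvj, if_neg hvi, hvu]
  irrefl u h := by
    split_ifs at h <;> simp_all [d.irrefl u]

theorem addEdge_pair (d : Diagram n) {i j : Fin n} (hi : d.pair (Sum.inr i) = none)
    (hj : d.pair (Sum.inl j) = none) (u : Fin n ⊕ Fin n) :
    (d.addEdge hi hj).pair u = if u = Sum.inl j then some (Sum.inr i)
      else if u = Sum.inr i then some (Sum.inl j) else d.pair u := rfl

section addEdge

variable (d : Diagram n) {i j : Fin n} (hi : d.pair (Sum.inr i) = none)
  (hj : d.pair (Sum.inl j) = none)

theorem addEdge_pair_inr_self : (d.addEdge hi hj).pair (Sum.inr i) = some (Sum.inl j) := by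
  simp [addEdge_pair]

theorem isRook_addEdge (hd : IsRook d) : IsRook (d.addEdge hi hj) := fun a b => by
  simp only [addEdge_pair]
  exact ⟨by split_ifs <;> first | contradiction | simp [(hd a b).1],
    by split_ifs <;> first | contradiction | simp [(hd a b).2]⟩

theorem eraseRight_addEdge : (d.addEdge hi hj).eraseRight i = d := by
  refine ext (funext fun u => ?_)
  have hu : d.pair u ≠ some (Sum.inr i) := fun h => by simpa [hi] using d.symm _ _ h
  simp only [eraseRight_pair, addEdge_pair]
  split_ifs <;> simp_all

end addEdge

theorem exists_pair_inl_eq_none {d : Diagram n} (hd : IsRook d) {i : Fin n}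
    (hi : d.pair (Sum.inr i) = none) : ∃ j, d.pair (Sum.inl j) = none := by
  by_contra! hc
  have H : ∀ a, ∃ b, d.pair (Sum.inl a) = some (Sum.inr b) := by
    intro a
    rcases hp : d.pair (Sum.inl a) with _ | (b | b)
    · exact absurd hp (hc a)
    · exact absurd hp (hd a b).1
    · exact ⟨b, rfl⟩
  choose g hg using H
  have hinj : Function.Injective g := fun a b hab => by
    have hb := d.symm _ _ (hg b)
    rw [← hab, d.symm _ _ (hg a)] at hb
    simpa using hb
  obtain ⟨j, rfl⟩ := Finite.surjective_of_injective hinj i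
  simpa [hi] using d.symm _ _ (hg j)

theorem not_midIsolated_rho {x : Diagram n} {i j : Fin n}
    (hx : x.pair (Sum.inr i) = some (Sum.inl j)) (a : Fin n) :
    ¬ midIsolated x (rho n i) a := by
  intro hiso
  by_cases hai : a = i
  · subst hai
    exact hiso (Sum.inl j) (.symm _ _ (.rel _ _ (Or.inl ⟨_, _, hx, rfl, rfl⟩)))
  · exact hiso (Sum.inr a)
      (.symm _ _ (.rel _ _ (Or.inr ⟨Sum.inl a, Sum.inr a, by simp [rho_pair_inl, hai], rfl, rfl⟩)))

theorem loopCount_eq_zero {x y : Diagram n} (h : ∀ a, ¬ midIsolated x y a) :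
    loopCount x y = 0 :=
  have : IsEmpty {a // isLoopNode x y a} := ⟨fun a => h a.1 a.2.1⟩
  Nat.card_of_isEmpty

theorem freeCount_eq_zero {x y : Diagram n} (h : ∀ a, ¬ midIsolated x y a) :
    freeCount x y = 0 :=
  have : IsEmpty {a // isFreeNode x y a} := ⟨fun a => h a.1 a.2.1⟩
  Nat.card_of_isEmpty

end Diagram

theorem Module.Basis.mul_mem_of_basis_mul_mem {ι R A : Type*} [CommSemiring R] [Semiring A]
    [Algebra R A] (b : Module.Basis ι R A) {M : Submodule R A} {g : A}
    (h : ∀ d, b d * g ∈ M) (a : A) : a * g ∈ M := by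
  have hmap : (⊤ : Submodule R A).map (LinearMap.mulRight R g) ≤ M := by
    rw [← b.span_eq, Submodule.map_span, Submodule.span_le]
    rintro _ ⟨_, ⟨d, rfl⟩, rfl⟩
    exact h d
  exact hmap ⟨a, trivial, rfl⟩

namespace IsDiagramAlgebra

variable {R : Type} [CommRing R] {n : ℕ} {δ ε : R} {A : Type} [Ring A] [Algebra R A]
  (h : IsDiagramAlgebra R n δ ε IsRook A)

theorem basis_mul_rho (x : {d : Diagram n // IsRook d}) (i : Fin n) :
    h.basis x * h.basis ⟨rho n i, isRook_rho n i⟩ =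
      (δ ^ loopCount x.1 (rho n i) * ε ^ freeCount x.1 (rho n i)) •
        h.basis ⟨x.1.eraseRight i,
          h.concat_mem x ⟨rho n i, isRook_rho n i⟩ _ (concatEq_rho x.2 i)⟩ :=
  h.basis_mul _ _ ⟨_, _⟩ (concatEq_rho x.2 i)

theorem exists_basis_mul_rho_eq {i : Fin n} (d : {d : Diagram n // IsRook d})
    (hdi : d.1.pair (Sum.inr i) = none) :
    ∃ y, h.basis y * h.basis ⟨rho n i, isRook_rho n i⟩ = h.basis d := by
  obtain ⟨j, hj⟩ := exists_pair_inl_eq_none d.2 hdi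
  have hy : ConcatEq (d.1.addEdge hdi hj) (rho n i) d.1 := by
    simpa only [eraseRight_addEdge] using concatEq_rho (isRook_addEdge d.1 hdi hj d.2) i
  have hiso := not_midIsolated_rho (addEdge_pair_inr_self d.1 hdi hj)
  refine ⟨⟨_, isRook_addEdge d.1 hdi hj d.2⟩, ?_⟩
  rw [h.basis_mul _ _ d hy, loopCount_eq_zero hiso, freeCount_eq_zero hiso, pow_zero, pow_zero,
    one_mul, one_smul]

end IsDiagramAlgebra

open Diagram in
/-- In the rook algebra `R_n(ε)`, the left ideal `R_n(ε)·ρ_i` has `R`-basis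
consisting of exactly those rook diagrams in which the `i`-th node on the right
is not connected to any node on the left: as sets, the left ideal generated by
`ρ_i` coincides with the `R`-span of those (R-linearly independent) basis
diagrams. -/
theorem ideal_rho_basis (R A : Type) [CommRing R] [Ring A] [Algebra R A]
    (n : ℕ) (δ ε : R) (h : IsDiagramAlgebra R n δ ε IsRook A) (i : Fin n) :
    ((Ideal.span {h.basis ⟨rho n i, isRook_rho n i⟩} : Ideal A) : Set A) =
      (Submodule.span R {x : A | ∃ d : {d : Diagram n // IsRook d},
        d.1.pair (Sum.inr i) = none ∧ x = h.basis d} : Set A) := by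
  suffices (Ideal.span {h.basis ⟨rho n i, isRook_rho n i⟩}).restrictScalars R =
      Submodule.span R {x : A | ∃ d : {d : Diagram n // IsRook d},
        d.1.pair (Sum.inr i) = none ∧ x = h.basis d} from congrArg SetLike.coe this
  apply le_antisymm
  · intro _ hx
    obtain ⟨a, rfl⟩ := Ideal.mem_span_singleton'.mp hx
    refine h.basis.mul_mem_of_basis_mul_mem (fun x => ?_) a
    rw [h.basis_mul_rho x i]
    exact Submodule.smul_mem _ _ (Submodule.subset_span ⟨_, eraseRight_pair_inr_self _ _, rfl⟩)
  · rw [Submodule.span_le]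
    rintro _ ⟨d, hdi, rfl⟩
    obtain ⟨y, hy⟩ := h.exists_basis_mul_rho_eq d hdi
    exact Ideal.mem_span_singleton'.mpr ⟨h.basis y, hy⟩
end

section
/- In the Brauer algebra Br_n(δ), let p be a link state with i defects and no missing edges, and let d_p be the diagram whose left and right link states both equal p with all edges horizontal. Then for every element y of Br_n(δ) lying in the left ideal J_p, one has y·d_p = δ^{(n−i)/2}·y. In particular d_p² = δ^{(n−i)/2} d_p, so if δ is invertible then δ^{−(n−i)/2} d_p is an idempotent. -/
/-!
Let `x` be a Brauer diagram whose right link state arises from `p` by splices and deletions. These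
moves never remove a connection of `p`, so every arc `a – b` of `p` is also a right arc of `x`,
and every other right node of `x` is a defect of `p`, which `d_p` prolongs by a horizontal edge.
Hence the concatenation of `x` with `d_p` has the boundary connectivity of `x`, and its closed
components are exactly the loops formed by an arc of `p` and the same arc of `x`: there are
`(n - i) / 2` of them, so `x · d_p = δ ^ ((n - i) / 2) x`. This extends linearly to `J_p`, which
contains `d_p` itself.
-/

open MulOpposite

open Diagram

/-- A link state on `n` nodes: each node may be connected to at most one other
node, and an unconnected node may carry a hanging edge (a *defect*).  A node
with neither a connection nor a defect has a *missing edge*. -/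
structure LinkState (n : ℕ) : Type where
  conn : Fin n → Option (Fin n)
  defect : Fin n → Prop
  symm : ∀ a b, conn a = some b → conn b = some a
  irrefl : ∀ a, conn a ≠ some a
  not_both : ∀ a, defect a → conn a = none

namespace LinkState

variable {n : ℕ}

private lemma bind_eq_some (d : Diagram n) (a b : Fin n) :
    (d.pair (Sum.inr a)).bind (Sum.elim (fun _ => none) some) = some b ↔
      d.pair (Sum.inr a) = some (Sum.inr b) := by
  rcases h : d.pair (Sum.inr a) with _ | (c | c) <;> simp

/-- The right link state of a diagram, obtained by slicing the diagram
vertically down the middle: right-to-right connections become connections, and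
left-to-right connections become defects. -/
def rightLS (d : Diagram n) : LinkState n where
  conn a := (d.pair (Sum.inr a)).bind (Sum.elim (fun _ => none) some)
  defect a := ∃ b, d.pair (Sum.inr a) = some (Sum.inl b)
  symm a b hab := by
    rw [bind_eq_some] at hab
    rw [bind_eq_some]
    exact d.symm _ _ hab
  irrefl a h := by
    rw [bind_eq_some] at h
    exact d.irrefl _ h
  not_both a h := by
    obtain ⟨b, hb⟩ := h
    simp [hb]

/-- `MirrorOf p d` says that `d` is the diagram whose left and right link
states are both `p`, and all of whose left-to-right edges are horizontal:
its left-to-left and right-to-right connections are exactly the connections of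
`p`, and it has a horizontal left-to-right edge at each defect of `p`. -/
def MirrorOf (p : LinkState n) (d : Diagram n) : Prop :=
  (∀ a b : Fin n, d.pair (Sum.inl a) = some (Sum.inl b) ↔ p.conn a = some b) ∧
  (∀ a b : Fin n, d.pair (Sum.inr a) = some (Sum.inr b) ↔ p.conn a = some b) ∧
  (∀ a b : Fin n, d.pair (Sum.inl a) = some (Sum.inr b) ↔ (a = b ∧ p.defect a)) ∧
  (∀ a b : Fin n, d.pair (Sum.inr a) = some (Sum.inl b) ↔ (a = b ∧ p.defect a))

/-- `q` is obtained from `p` by a *splice*: connecting two defects of `p` to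
form an edge. -/
def SpliceStep (p q : LinkState n) : Prop :=
  ∃ a b : Fin n, a ≠ b ∧ p.defect a ∧ p.defect b ∧
    q.conn a = some b ∧ q.conn b = some a ∧ ¬ q.defect a ∧ ¬ q.defect b ∧
    ∀ c, c ≠ a → c ≠ b → (q.conn c = p.conn c ∧ (q.defect c ↔ p.defect c))

/-- `q` is obtained from `p` by a *deletion*: deleting a defect of `p`,
leaving a missing edge. -/
def DeleteStep (p q : LinkState n) : Prop :=
  ∃ a : Fin n, p.defect a ∧ ¬ q.defect a ∧ q.conn a = none ∧
    ∀ c, c ≠ a → (q.conn c = p.conn c ∧ (q.defect c ↔ p.defect c))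

/-- `Reach p q` says that `q` is obtained from `p` by a (possibly empty)
sequence of splices and deletions. -/
def Reach : LinkState n → LinkState n → Prop :=
  Relation.ReflTransGen (fun p q => SpliceStep p q ∨ DeleteStep p q)

/-- The number of defects of a link state. -/
noncomputable def defectCount (p : LinkState n) : ℕ :=
  Nat.card {a : Fin n // p.defect a}

/-- A link state with no missing edges. -/
def NoMissing (p : LinkState n) : Prop :=
  ∀ a, p.conn a = none → p.defect a

end LinkState

theorem Nat.card_eq_mul_card_quot {α : Type*} [Finite α] {r : α → α → Prop}
    (hr : Equivalence r) {k : ℕ} (hk : ∀ a, Nat.card {b // r a b} = k) :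
    Nat.card α = k * Nat.card (Quot r) := by
  have := Fintype.ofFinite (Quot r)
  have hfiber : ∀ q : Quot r, Nat.card {a // Quot.mk r a = q} = k := by
    refine Quot.ind fun a => ?_
    rw [← hk a]
    refine Nat.card_congr (Equiv.subtypeEquivRight fun b => ?_)
    rw [Quot.eq, hr.eqvGen_iff]
    exact ⟨hr.symm, hr.symm⟩
  rw [← Nat.card_congr (Equiv.sigmaFiberEquiv (Quot.mk r)), Nat.card_sigma,
    Finset.sum_congr rfl fun q _ => hfiber q, Finset.sum_const, smul_eq_mul, Finset.card_univ,
    Nat.card_eq_fintype_card, mul_comm]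

theorem mul_eq_smul_of_mem_span {R A : Type*} [CommSemiring R] [Semiring A] [Algebra R A]
    {s : Set A} {a : A} {c : R} (hs : ∀ y ∈ s, y * a = c • y) {y : A}
    (hy : y ∈ Submodule.span R s) : y * a = c • y := by
  induction hy using Submodule.span_induction with
  | mem y hy => exact hs y hy
  | zero => simp
  | add y z _ _ hy hz => rw [add_mul, hy, hz, smul_add]
  | smul r y _ hy => rw [smul_mul_assoc, hy, smul_comm]

theorem isIdempotentElem_smul_of_mul_self_eq_smul {R A : Type*} [CommSemiring R] [Semiring A]
    [Algebra R A] {e : A} {b c : R} (he : e * e = c • e) (hbc : b * c = 1) :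
    IsIdempotentElem (b • e) := by
  rw [IsIdempotentElem, smul_mul_smul_comm, he, smul_smul, mul_assoc, hbc, mul_one]

namespace LinkState

variable {n : ℕ}

theorem ext {p q : LinkState n} (hconn : ∀ a, p.conn a = q.conn a)
    (hdefect : ∀ a, p.defect a ↔ q.defect a) : p = q := by
  cases p; cases q
  simp only [LinkState.mk.injEq]
  exact ⟨funext hconn, funext fun a => propext (hdefect a)⟩

def ConnSubset (p q : LinkState n) : Prop :=
  ∀ a b, p.conn a = some b → q.conn a = some b

theorem SpliceStep.connSubset {p q : LinkState n} (h : SpliceStep p q) : p.ConnSubset q := by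
  obtain ⟨a, b, -, ha, hb, -, -, -, -, hrest⟩ := h
  intro c e hce
  have hca : c ≠ a := by rintro rfl; simp [p.not_both c ha] at hce
  have hcb : c ≠ b := by rintro rfl; simp [p.not_both c hb] at hce
  rw [(hrest c hca hcb).1, hce]

theorem DeleteStep.connSubset {p q : LinkState n} (h : DeleteStep p q) : p.ConnSubset q := by
  obtain ⟨a, ha, -, -, hrest⟩ := h
  intro c e hce
  have hca : c ≠ a := by rintro rfl; simp [p.not_both c ha] at hce
  rw [(hrest c hca).1, hce]

theorem Reach.connSubset {p q : LinkState n} (h : Reach p q) : p.ConnSubset q := by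
  induction h with
  | refl => exact fun _ _ => id
  | tail _ hstep ih =>
    exact fun a b hab => (hstep.elim SpliceStep.connSubset DeleteStep.connSubset) a b (ih a b hab)

theorem rightLS_conn_eq_some {x : Diagram n} {a b : Fin n} :
    (rightLS x).conn a = some b ↔ x.pair (Sum.inr a) = some (Sum.inr b) :=
  bind_eq_some x a b

theorem ConnSubset.pair_inr {p : LinkState n} {x : Diagram n} (hx : p.ConnSubset (rightLS x))
    {a b : Fin n} (h : p.conn a = some b) : x.pair (Sum.inr a) = some (Sum.inr b) :=
  rightLS_conn_eq_some.mp (hx a b h)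

theorem defect_iff_conn_eq_none {p : LinkState n} (hp : NoMissing p) (a : Fin n) :
    p.defect a ↔ p.conn a = none :=
  ⟨p.not_both a, hp a⟩

theorem card_connected_add_defectCount {p : LinkState n} (hp : NoMissing p) :
    Nat.card {a : Fin n // (p.conn a).isSome} + defectCount p = n := by
  have hdefect : defectCount p = Nat.card {a : Fin n // ¬ (p.conn a).isSome} :=
    Nat.card_congr (Equiv.subtypeEquivRight fun a => by simp [defect_iff_conn_eq_none hp])
  rw [hdefect, ← Nat.card_sum, Nat.card_congr (Equiv.sumCompl _), Nat.card_eq_fintype_card,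
    Fintype.card_fin]

theorem rightLS_eq_of_mirrorOf {p : LinkState n} {d : Diagram n}
    (hd : MirrorOf p d) : rightLS d = p := by
  obtain ⟨-, hrr, -, hrl⟩ := hd
  refine ext (fun a => Option.ext fun b => rightLS_conn_eq_some.trans (hrr a b)) fun a => ?_
  exact ⟨fun ⟨b, hb⟩ => ((hrl a b).mp hb).2, fun ha => ⟨a, (hrl a a).mpr ⟨rfl, ha⟩⟩⟩

end LinkState

namespace Diagram

open LinkState

variable {n : ℕ}

def strand (x : Diagram n) (u : Fin n ⊕ Fin n) : Finset (Fin n ⊕ Fin n) :=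
  insert u (x.pair u).toFinset

theorem strand_eq_of_pair_eq_some {x : Diagram n} {u v : Fin n ⊕ Fin n}
    (h : x.pair u = some v) : x.strand u = x.strand v := by
  simp [strand, h, x.symm u v h, Finset.pair_comm]

theorem eq_or_pair_eq_some_of_mem_strand {x : Diagram n} {u v : Fin n ⊕ Fin n}
    (h : v ∈ x.strand u) : v = u ∨ x.pair u = some v := by
  simpa [strand, eq_comm] using h

theorem degTwo_of_isBrauer {x y : Diagram n} (hx : IsBrauer x) (hy : IsBrauer y) (a : Fin n) :
    degTwo x y a :=
  ⟨Option.isSome_iff_exists.mp (hx _), Option.isSome_iff_exists.mp (hy _)⟩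

theorem freeCount_eq_zero_of_isBrauer {x y : Diagram n} (hx : IsBrauer x) (hy : IsBrauer y) :
    freeCount x y = 0 := by
  have : IsEmpty {a // isFreeNode x y a} :=
    ⟨fun a => a.2.2 fun b _ => degTwo_of_isBrauer hx hy b⟩
  exact Nat.card_of_isEmpty

theorem cConn_eLM {x y : Diagram n} {s t : Fin n ⊕ Fin n} (h : x.pair s = some t) :
    cConn x y (eLM s) (eLM t) :=
  .rel _ _ (.inl ⟨s, t, h, rfl, rfl⟩)

theorem cConn_eMR {x y : Diagram n} {s t : Fin n ⊕ Fin n} (h : y.pair s = some t) :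
    cConn x y (eMR s) (eMR t) :=
  .rel _ _ (.inr ⟨s, t, h, rfl, rfl⟩)

section Mirror

variable {p : LinkState n} {x d : Diagram n}

theorem conn_eq_none_of_pair_inr_eq_inl (hx : p.ConnSubset (rightLS x)) {a c : Fin n}
    (h : x.pair (Sum.inr a) = some (Sum.inl c)) : p.conn a = none := by
  rcases hc : p.conn a with _ | b
  · rfl
  · simp [hx.pair_inr hc] at h

theorem conn_eq_some_or_of_pair_inr_eq_inr (hx : p.ConnSubset (rightLS x)) {a b : Fin n}
    (h : x.pair (Sum.inr a) = some (Sum.inr b)) :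
    p.conn a = some b ∨ (p.conn a = none ∧ p.conn b = none) := by
  rcases ha : p.conn a with _ | c
  · rcases hb : p.conn b with _ | c
    · simp
    · have := hx.pair_inr hb
      rw [x.symm _ _ h, Option.some_inj, Sum.inr_injective.eq_iff] at this
      rw [← this] at hb
      simp [p.symm _ _ hb] at ha
  · have := hx.pair_inr ha
    rw [h, Option.some_inj, Sum.inr_injective.eq_iff] at this
    simp [this]

theorem cConn_mid_right (hd : MirrorOf p d) {a : Fin n} (ha : p.defect a) :
    cConn x d (mid a) (eB (Sum.inr a)) :=
  cConn_eMR (s := Sum.inl a) (t := Sum.inr a) ((hd.2.2.1 a a).mpr ⟨rfl, ha⟩)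

/-- Constant on the components of the concatenation of `x` with the mirror diagram of `p`: a node
lies on a strand of `x`, prolonged horizontally at the defects of `p`, and the flag marks the middle
nodes on the loops closed by the arcs of `p`. -/
def componentLabel (p : LinkState n) (x : Diagram n) :
    CNode n → Finset (Fin n ⊕ Fin n) × Bool
  | .inl c => (x.strand (.inl c), false)
  | .inr (.inl a) => (x.strand (.inr a), (p.conn a).isSome)
  | .inr (.inr a) => (x.strand (.inr a), false)

theorem componentLabel_eB (u : Fin n ⊕ Fin n) :
    componentLabel p x (eB u) = (x.strand u, false) := by
  cases u <;> rfl

theorem componentLabel_eq_of_cEdge (hd : MirrorOf p d) (hx : p.ConnSubset (rightLS x))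
    {u v : CNode n} (h : cEdge x d u v) : componentLabel p x u = componentLabel p x v := by
  obtain ⟨hll, hrr, hlr, hrl⟩ := hd
  rcases h with ⟨s, t, hst, rfl, rfl⟩ | ⟨s, t, hst, rfl, rfl⟩
  · have hts := x.symm s t hst
    rcases s with c | a <;> rcases t with c' | b <;>
      simp only [eLM, Sum.elim_inl, Sum.elim_inr, componentLabel, strand_eq_of_pair_eq_some hst]
    · simp [conn_eq_none_of_pair_inr_eq_inl hx hts]
    · simp [conn_eq_none_of_pair_inr_eq_inl hx hst]
    · rcases conn_eq_some_or_of_pair_inr_eq_inr hx hst with hab | ⟨ha, hb⟩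
      · simp [hab, p.symm _ _ hab]
      · simp [ha, hb]
  · rcases s with a | a <;> rcases t with b | b <;>
      simp only [eMR, Sum.elim_inl, Sum.elim_inr, componentLabel]
    · have hab := (hll a b).mp hst
      simp [strand_eq_of_pair_eq_some (hx.pair_inr hab), hab, p.symm _ _ hab]
    · obtain ⟨rfl, ha⟩ := (hlr a b).mp hst
      simp [p.not_both a ha]
    · obtain ⟨rfl, ha⟩ := (hrl a b).mp hst
      simp [p.not_both a ha]
    · simp [strand_eq_of_pair_eq_some (hx.pair_inr ((hrr a b).mp hst))]

theorem componentLabel_eq_of_cConn (hd : MirrorOf p d) (hx : p.ConnSubset (rightLS x))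
    {u v : CNode n} (h : cConn x d u v) : componentLabel p x u = componentLabel p x v :=
  (InvImage.equivalence _ _ eq_equivalence).eqvGen_iff.mp
    (Relation.EqvGen.mono (fun _ _ => componentLabel_eq_of_cEdge hd hx) _ _ h)

theorem concatEq_self (hp : NoMissing p) (hd : MirrorOf p d) (hx : p.ConnSubset (rightLS x)) :
    ConcatEq x d x := by
  have hdefect : ∀ {a}, p.conn a = none → p.defect a := (defect_iff_conn_eq_none hp _).mpr
  refine fun u v =>
    ⟨fun huv => ⟨fun he => x.irrefl u (he ▸ huv), ?_⟩, fun ⟨hne, huv⟩ => ?_⟩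
  · rcases u with c | a <;> rcases v with c' | b
    · exact cConn_eLM (s := .inl c) (t := .inl c') huv
    · exact (cConn_eLM (s := .inl c) (t := .inr b) huv).trans _ _ _
        (cConn_mid_right hd (hdefect (conn_eq_none_of_pair_inr_eq_inl hx (x.symm _ _ huv))))
    · exact (cConn_mid_right hd (hdefect (conn_eq_none_of_pair_inr_eq_inl hx huv))).symm.trans
        _ _ _ (cConn_eLM (s := .inr a) (t := .inl c') huv)
    · rcases conn_eq_some_or_of_pair_inr_eq_inr hx huv with hab | ⟨ha, hb⟩
      · exact cConn_eMR (s := .inr a) (t := .inr b) ((hd.2.1 a b).mpr hab)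
      · exact ((cConn_mid_right hd (hdefect ha)).symm.trans _ _ _
          (cConn_eLM (s := .inr a) (t := .inr b) huv)).trans _ _ _
          (cConn_mid_right hd (hdefect hb))
  · have hstrand := congrArg Prod.fst (componentLabel_eq_of_cConn hd hx huv)
    simp only [componentLabel_eB] at hstrand
    have hv : v ∈ x.strand u := hstrand ▸ Finset.mem_insert_self v _
    exact (eq_or_pair_eq_some_of_mem_strand hv).resolve_left hne.symm

theorem midIsolated_iff (hp : NoMissing p) (hd : MirrorOf p d) (hx : p.ConnSubset (rightLS x))
    (a : Fin n) : midIsolated x d a ↔ (p.conn a).isSome := by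
  refine ⟨fun hiso => ?_, fun ha u hconn => ?_⟩
  · rw [Option.isSome_iff_ne_none]
    exact fun hnone => hiso _ (cConn_mid_right hd (hp a hnone)).symm
  · have hloop := congrArg Prod.snd (componentLabel_eq_of_cConn hd hx hconn)
    rw [componentLabel_eB] at hloop
    simp [componentLabel, mid, ha] at hloop

theorem isLoopNode_iff (hxB : IsBrauer x) (hdB : IsBrauer d) (hp : NoMissing p)
    (hd : MirrorOf p d) (hx : p.ConnSubset (rightLS x)) (a : Fin n) :
    isLoopNode x d a ↔ (p.conn a).isSome := by
  rw [isLoopNode, midIsolated_iff hp hd hx, and_iff_left fun b _ => degTwo_of_isBrauer hxB hdB b]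

theorem cConn_mid_iff (hd : MirrorOf p d) (hx : p.ConnSubset (rightLS x)) {a b c : Fin n}
    (hc : p.conn a = some c) : cConn x d (mid a) (mid b) ↔ b = a ∨ b = c := by
  refine ⟨fun hab => ?_, ?_⟩
  · have hstrand := congrArg Prod.fst (componentLabel_eq_of_cConn hd hx hab)
    simp only [componentLabel, mid] at hstrand
    have hb : Sum.inr b ∈ x.strand (Sum.inr a) := hstrand ▸ Finset.mem_insert_self _ _
    simpa [hx.pair_inr hc, eq_comm (a := c)] using eq_or_pair_eq_some_of_mem_strand hb
  · rintro (rfl | rfl)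
    · exact .refl _
    · exact cConn_eMR (s := .inl a) (t := .inl b) ((hd.1 a b).mpr hc)

theorem two_mul_loopCount (hxB : IsBrauer x) (hdB : IsBrauer d) (hp : NoMissing p)
    (hd : MirrorOf p d) (hx : p.ConnSubset (rightLS x)) :
    2 * loopCount x d = Nat.card {a : Fin n // (p.conn a).isSome} := by
  have hloop := isLoopNode_iff hxB hdB hp hd hx
  have hpair : ∀ a : {a // isLoopNode x d a},
      Nat.card {b : {a // isLoopNode x d a} // cConn x d (mid a.1) (mid b.1)} = 2 := by
    rintro ⟨a, ha⟩
    obtain ⟨c, hc⟩ := Option.isSome_iff_exists.mp ((hloop a).mp ha)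
    have hac : a ≠ c := by rintro rfl; exact p.irrefl a hc
    rw [← Set.ncard_pair hac, ← Nat.card_coe_set_eq]
    refine Nat.card_congr ((Equiv.subtypeSubtypeEquivSubtypeInter (isLoopNode x d)
      fun b => cConn x d (mid a) (mid b)).trans (Equiv.subtypeEquivRight fun b => ?_))
    rw [cConn_mid_iff hd hx hc, and_iff_right_of_imp]
    · rfl
    rintro (rfl | rfl)
    · exact ha
    · exact (hloop b).mpr (by simp [p.symm _ _ hc])
  have hcount := Nat.card_eq_mul_card_quot
    (r := fun a b : {a // isLoopNode x d a} => cConn x d (mid a.1) (mid b.1))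
    ((Relation.EqvGen.is_equivalence _).comap _) hpair
  rw [loopCount, ← hcount]
  exact Nat.card_congr (Equiv.subtypeEquivRight hloop)

theorem loopCount_eq (hxB : IsBrauer x) (hdB : IsBrauer d) (hp : NoMissing p)
    (hd : MirrorOf p d) (hx : p.ConnSubset (rightLS x)) :
    loopCount x d = (n - defectCount p) / 2 := by
  have := two_mul_loopCount hxB hdB hp hd hx
  have := card_connected_add_defectCount hp
  omega

end Mirror

end Diagram

open Diagram LinkState in
theorem IsDiagramAlgebra.basis_mul_basis_of_mirrorOf {R A : Type} [CommRing R] [Ring A]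
    [Algebra R A] {n : ℕ} {δ ε : R} (h : IsDiagramAlgebra R n δ ε IsBrauer A)
    {p : LinkState n} (hp : NoMissing p) {x d : {d : Diagram n // IsBrauer d}}
    (hd : MirrorOf p d.1) (hx : p.ConnSubset (rightLS x.1)) :
    h.basis x * h.basis d = δ ^ ((n - defectCount p) / 2) • h.basis x := by
  rw [h.basis_mul x d x (concatEq_self hp hd hx), freeCount_eq_zero_of_isBrauer x.2 d.2,
    loopCount_eq x.2 d.2 hp hd hx, pow_zero, mul_one]

open Diagram LinkState in
/-- In the Brauer algebra `Br_n(δ)`, let `p` be a link state with `i` defects and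
no missing edges, and let `d_p` be the diagram whose left and right link states
both equal `p` with all edges horizontal.  Then for every element `y` of
`Br_n(δ)` lying in the left ideal `J_p` (the span of the diagrams whose right
link state is obtained from `p` by a sequence of splices and deletions), one has
`y·d_p = δ^{(n−i)/2}·y`.  In particular `d_p² = δ^{(n−i)/2} d_p`, so if `δ` is
invertible then `δ^{−(n−i)/2} d_p` is an idempotent. -/
theorem mirror_diagram_eigenvalue (R A : Type) [CommRing R] [Ring A] [Algebra R A]
    (n : ℕ) (δ ε : R) (h : IsDiagramAlgebra R n δ ε IsBrauer A)
    (p : LinkState n) (hp : NoMissing p)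
    (dp : {d : Diagram n // IsBrauer d}) (hdp : MirrorOf p dp.1) :
    (∀ y ∈ Submodule.span R {x : A | ∃ d : {d : Diagram n // IsBrauer d},
        Reach p (rightLS d.1) ∧ x = h.basis d},
      y * h.basis dp = δ ^ ((n - defectCount p) / 2) • y) ∧
    h.basis dp * h.basis dp = δ ^ ((n - defectCount p) / 2) • h.basis dp ∧
    (∀ b : R, b * δ = 1 →
      (b ^ ((n - defectCount p) / 2) • h.basis dp) *
        (b ^ ((n - defectCount p) / 2) • h.basis dp) =
        b ^ ((n - defectCount p) / 2) • h.basis dp) := by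
  have hideal : ∀ y ∈ Submodule.span R {x : A | ∃ d : {d : Diagram n // IsBrauer d},
      Reach p (rightLS d.1) ∧ x = h.basis d},
      y * h.basis dp = δ ^ ((n - defectCount p) / 2) • y := by
    refine fun y => mul_eq_smul_of_mem_span ?_
    rintro _ ⟨x, hx, rfl⟩
    exact h.basis_mul_basis_of_mirrorOf hp hdp hx.connSubset
  have hsq := hideal _ <| Submodule.subset_span
    ⟨dp, by rw [rightLS_eq_of_mirrorOf hdp]; exact Relation.ReflTransGen.refl, rfl⟩
  exact ⟨hideal, hsq, fun b hb =>
    isIdempotentElem_smul_of_mul_self_eq_smul hsq (by rw [← mul_pow, hb, one_pow])⟩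
end
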